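/- Let f₁₀, f₁₁, f₁ᶻ, ρ ∈ (0,1) be such that all of f₁₀, f₁₁, f₁ᶻ - f₁₁, 1 - f₁ᶻ - f₁₀, f₁₀ + f₁₁, 1 - f₁₀ - f₁₁ are strictly positive. Define I as the empirical mutual information (as in the four-cell table with f₀₀ = 1-f₁ᶻ-f₁₀, f₀₁ = f₁ᶻ-f₁₁) and D(x‖ρ) = (1-f₁₀-f₁₁)·log₂((1-f₁₀-f₁₁)/(1-ρ)) + (f₁₀+f₁₁)·log₂((f₁₀+f₁₁)/ρ). Then ∂(I + D)/∂f₁₀ = log₂( f₁₀(1-ρ) / (ρ(1 - f₁ᶻ - f₁₀)) ) and ∂(I + D)/∂f₁₁ = log₂( f₁₁(1-ρ) / (ρ(f₁ᶻ - f₁₁)) ). -/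

import Mathlib

private lemma hasDerivAt_aux (a d ρ K u0 : ℝ) (hu0 : 0 < u0) (hau : 0 < a - u0) :
    HasDerivAt (fun u : ℝ =>
      ((a - u) * Real.log (a - u) + u * Real.log u
        - (1 - u - d) * Real.log (1 - ρ) - (u + d) * Real.log ρ + K) / Real.log 2)
      ((Real.log u0 - Real.log (a - u0) + Real.log (1 - ρ) - Real.log ρ) / Real.log 2) u0 := by
  have hid : HasDerivAt (fun u : ℝ => u) 1 u0 := hasDerivAt_id u0
  have h1 : HasDerivAt (fun u : ℝ => a - u) (-1) u0 := by
    simpa using hid.const_sub a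
  have hlog1 : HasDerivAt (fun u : ℝ => Real.log (a - u)) (-1 / (a - u0)) u0 :=
    h1.log (ne_of_gt hau)
  have t1 : HasDerivAt (fun u : ℝ => (a - u) * Real.log (a - u))
      ((-1) * Real.log (a - u0) + (a - u0) * (-1 / (a - u0))) u0 := h1.mul hlog1
  have t2 : HasDerivAt (fun u : ℝ => u * Real.log u) (1 * Real.log u0 + u0 * u0⁻¹) u0 :=
    hid.mul (Real.hasDerivAt_log (ne_of_gt hu0))
  have h3 : HasDerivAt (fun u : ℝ => 1 - u - d) (-1) u0 := by
    simpa using ((hasDerivAt_const u0 (1:ℝ)).sub hid).sub_const d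
  have t3 : HasDerivAt (fun u : ℝ => (1 - u - d) * Real.log (1 - ρ))
      ((-1) * Real.log (1 - ρ)) u0 := h3.mul_const _
  have h4 : HasDerivAt (fun u : ℝ => u + d) 1 u0 := hid.add_const d
  have t4 : HasDerivAt (fun u : ℝ => (u + d) * Real.log ρ) (1 * Real.log ρ) u0 :=
    h4.mul_const _
  have H := ((((t1.add t2).sub t3).sub t4).add_const K).div_const (Real.log 2)
  convert H using 2
  · rfl
  · rfl
  · rfl
  have h5 : a - u0 ≠ 0 := ne_of_gt hau
  have h6 : u0 ≠ 0 := ne_of_gt hu0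
  field_simp
  ring

/-- Gradient of `I + D` in `f₁₀` and `f₁₁`:
`∂(I+D)/∂f₁₀ = log₂(f₁₀(1-ρ)/(ρ(1-f₁ᶻ-f₁₀)))` and
`∂(I+D)/∂f₁₁ = log₂(f₁₁(1-ρ)/(ρ(f₁ᶻ-f₁₁)))`, where `I` is the empirical mutual
information and `D(x‖ρ)` the empirical KL divergence to Bernoulli(ρ). -/
theorem empirical_mi_kl_grad
    (fz f10 f11 ρ : ℝ)
    (hρ0 : 0 < ρ) (hρ1 : ρ < 1)
    (hfz0 : 0 < fz) (hfz1 : fz < 1)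
    (h10 : 0 < f10) (h11 : 0 < f11)
    (h11z : 0 < fz - f11) (h10z : 0 < 1 - fz - f10)
    (hx0 : 0 < f10 + f11) (hx1 : 0 < 1 - f10 - f11) :
    HasDerivAt (fun u : ℝ =>
        ((1 - fz - u) * Real.logb 2 ((1 - fz - u) / ((1 - u - f11) * (1 - fz))) +
          (fz - f11) * Real.logb 2 ((fz - f11) / ((1 - u - f11) * fz)) +
          u * Real.logb 2 (u / ((u + f11) * (1 - fz))) +
          f11 * Real.logb 2 (f11 / ((u + f11) * fz))) +
        ((1 - u - f11) * Real.logb 2 ((1 - u - f11) / (1 - ρ)) +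
          (u + f11) * Real.logb 2 ((u + f11) / ρ)))
      (Real.logb 2 (f10 * (1 - ρ) / (ρ * (1 - fz - f10)))) f10 ∧
    HasDerivAt (fun v : ℝ =>
        ((1 - fz - f10) * Real.logb 2 ((1 - fz - f10) / ((1 - f10 - v) * (1 - fz))) +
          (fz - v) * Real.logb 2 ((fz - v) / ((1 - f10 - v) * fz)) +
          f10 * Real.logb 2 (f10 / ((f10 + v) * (1 - fz))) +
          v * Real.logb 2 (v / ((f10 + v) * fz))) +
        ((1 - f10 - v) * Real.logb 2 ((1 - f10 - v) / (1 - ρ)) +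
          (f10 + v) * Real.logb 2 ((f10 + v) / ρ)))
      (Real.logb 2 (f11 * (1 - ρ) / (ρ * (fz - f11)))) f11 := by
  have hL2 : Real.log 2 ≠ 0 := ne_of_gt (Real.log_pos one_lt_two)
  have hρ : ρ ≠ 0 := ne_of_gt hρ0
  have hρ' : (1 : ℝ) - ρ ≠ 0 := ne_of_gt (by linarith)
  have hfz : fz ≠ 0 := ne_of_gt hfz0
  have hfz' : (1 : ℝ) - fz ≠ 0 := by
    have : (0:ℝ) < 1 - fz := by linarith
    exact ne_of_gt this
  have hBD : fz - f11 ≠ 0 := ne_of_gt h11z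
  have hD : f11 ≠ 0 := ne_of_gt h11
  have hC : f10 ≠ 0 := ne_of_gt h10
  have hA : (1:ℝ) - fz - f10 ≠ 0 := ne_of_gt h10z
  constructor
  · -- derivative in f10
    set K : ℝ := (fz - f11) * Real.log (fz - f11) + f11 * Real.log f11
        - fz * Real.log fz - (1 - fz) * Real.log (1 - fz) with hK
    have key := hasDerivAt_aux (1 - fz) f11 ρ K f10 h10 (by linarith)
    have hEq : (fun u : ℝ =>
        ((1 - fz - u) * Real.logb 2 ((1 - fz - u) / ((1 - u - f11) * (1 - fz))) +
          (fz - f11) * Real.logb 2 ((fz - f11) / ((1 - u - f11) * fz)) +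
          u * Real.logb 2 (u / ((u + f11) * (1 - fz))) +
          f11 * Real.logb 2 (f11 / ((u + f11) * fz))) +
        ((1 - u - f11) * Real.logb 2 ((1 - u - f11) / (1 - ρ)) +
          (u + f11) * Real.logb 2 ((u + f11) / ρ)))
        =ᶠ[nhds f10] (fun u : ℝ =>
      ((1 - fz - u) * Real.log (1 - fz - u) + u * Real.log u
        - (1 - u - f11) * Real.log (1 - ρ) - (u + f11) * Real.log ρ + K) / Real.log 2) := by
      have e1 : ∀ᶠ u in nhds f10, 0 < u := eventually_gt_nhds h10
      have e2 : ∀ᶠ u in nhds f10, u < 1 - fz := eventually_lt_nhds (by linarith)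
      filter_upwards [e1, e2] with u hu1 hu2
      have p1 : (0:ℝ) < 1 - fz - u := by linarith
      have p2 : (0:ℝ) < 1 - u - f11 := by linarith
      have p3 : (0:ℝ) < u + f11 := by linarith
      have n1 : (1:ℝ) - fz - u ≠ 0 := ne_of_gt p1
      have n2 : (1:ℝ) - u - f11 ≠ 0 := ne_of_gt p2
      have n3 : u + f11 ≠ 0 := ne_of_gt p3
      have nu : u ≠ 0 := ne_of_gt hu1
      simp only [Real.logb]
      rw [Real.log_div n1 (mul_ne_zero n2 hfz'), Real.log_mul n2 hfz',
          Real.log_div hBD (mul_ne_zero n2 hfz), Real.log_mul n2 hfz,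
          Real.log_div nu (mul_ne_zero n3 hfz'), Real.log_mul n3 hfz',
          Real.log_div hD (mul_ne_zero n3 hfz), Real.log_mul n3 hfz,
          Real.log_div n2 hρ', Real.log_div n3 hρ]
      field_simp
      ring
    have main := key.congr_of_eventuallyEq hEq
    have hval : (Real.log f10 - Real.log (1 - fz - f10) + Real.log (1 - ρ) - Real.log ρ)
          / Real.log 2
        = Real.logb 2 (f10 * (1 - ρ) / (ρ * (1 - fz - f10))) := by
      rw [Real.logb, Real.log_div (mul_ne_zero hC hρ') (mul_ne_zero hρ hA),
          Real.log_mul hC hρ', Real.log_mul hρ hA]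
      ring
    rw [← hval]
    exact main
  · -- derivative in f11
    set K : ℝ := (1 - fz - f10) * Real.log (1 - fz - f10) + f10 * Real.log f10
        - (1 - fz) * Real.log (1 - fz) - fz * Real.log fz with hK
    have key := hasDerivAt_aux fz f10 ρ K f11 h11 h11z
    have hEq : (fun v : ℝ =>
        ((1 - fz - f10) * Real.logb 2 ((1 - fz - f10) / ((1 - f10 - v) * (1 - fz))) +
          (fz - v) * Real.logb 2 ((fz - v) / ((1 - f10 - v) * fz)) +
          f10 * Real.logb 2 (f10 / ((f10 + v) * (1 - fz))) +
          v * Real.logb 2 (v / ((f10 + v) * fz))) +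
        ((1 - f10 - v) * Real.logb 2 ((1 - f10 - v) / (1 - ρ)) +
          (f10 + v) * Real.logb 2 ((f10 + v) / ρ)))
        =ᶠ[nhds f11] (fun v : ℝ =>
      ((fz - v) * Real.log (fz - v) + v * Real.log v
        - (1 - v - f10) * Real.log (1 - ρ) - (v + f10) * Real.log ρ + K) / Real.log 2) := by
      have e1 : ∀ᶠ v in nhds f11, 0 < v := eventually_gt_nhds h11
      have e2 : ∀ᶠ v in nhds f11, v < fz := eventually_lt_nhds (by linarith)
      filter_upwards [e1, e2] with v hv1 hv2
      have p1 : (0:ℝ) < fz - v := by linarith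
      have p2 : (0:ℝ) < 1 - f10 - v := by linarith
      have p3 : (0:ℝ) < f10 + v := by linarith
      have n1 : fz - v ≠ 0 := ne_of_gt p1
      have n2 : (1:ℝ) - f10 - v ≠ 0 := ne_of_gt p2
      have n3 : f10 + v ≠ 0 := ne_of_gt p3
      have nv : v ≠ 0 := ne_of_gt hv1
      simp only [Real.logb]
      rw [Real.log_div hA (mul_ne_zero n2 hfz'), Real.log_mul n2 hfz',
          Real.log_div n1 (mul_ne_zero n2 hfz), Real.log_mul n2 hfz,
          Real.log_div hC (mul_ne_zero n3 hfz'), Real.log_mul n3 hfz',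
          Real.log_div nv (mul_ne_zero n3 hfz), Real.log_mul n3 hfz,
          Real.log_div n2 hρ', Real.log_div n3 hρ]
      field_simp
      ring
    have main := key.congr_of_eventuallyEq hEq
    have hval : (Real.log f11 - Real.log (fz - f11) + Real.log (1 - ρ) - Real.log ρ)
          / Real.log 2
        = Real.logb 2 (f11 * (1 - ρ) / (ρ * (fz - f11))) := by
      rw [Real.logb, Real.log_div (mul_ne_zero hD hρ') (mul_ne_zero hρ hBD),
          Real.log_mul hD hρ', Real.log_mul hρ hBD]
      ring
    rw [← hval]
    exact main
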